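/- arXiv:1812.06287 — 4 statements merged into one kernel-verified Lean document; each statement's English description precedes it below -/
import Mathlib

section
/- Let G be a finite simple graph on vertex set V with n = |V| ≥ 1. The following are equivalent: (a) there exist a bijection v : Fin n → V and, for each index i with 1 ≤ i ≤ n−1, a trail P_i in G from v(i) to v(i+1), such that the edge sets of P_1, …, P_{n−1} are pairwise disjoint; (b) G contains a trail whose support contains every vertex of V. -/
/-! Concatenating the trails `P i` gives a trail through every vertex, because their edge sets
are disjoint. Conversely, choose for each vertex one position at which a spanning trail visits it
and list the vertices by increasing position: the pieces of the trail between consecutive chosen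
positions occupy disjoint stretches of its edge list, hence are pairwise edge-disjoint trails. -/

namespace SimpleGraph.Walk

variable {V : Type*} {G : SimpleGraph V}

def appendAll : {m : ℕ} → {v : Fin (m + 1) → V} →
    ((i : Fin m) → G.Walk (v i.castSucc) (v i.succ)) → G.Walk (v 0) (v (Fin.last m))
  | 0, _, _ => nil
  | _ + 1, v, P => (P 0).append (appendAll (v := fun i => v i.succ) fun i => P i.succ)

lemma edges_appendAll {m : ℕ} {v : Fin (m + 1) → V}
    (P : (i : Fin m) → G.Walk (v i.castSucc) (v i.succ)) :
    (appendAll P).edges = (List.ofFn fun i => (P i).edges).flatten := by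
  induction m with
  | zero => simp [appendAll]
  | succ m ih =>
    rw [List.ofFn_succ, List.flatten_cons, ← ih (v := fun i => v i.succ) fun i => P i.succ]
    exact edges_append _ _

lemma mem_support_appendAll {m : ℕ} {v : Fin (m + 1) → V}
    (P : (i : Fin m) → G.Walk (v i.castSucc) (v i.succ)) (i : Fin (m + 1)) :
    v i ∈ (appendAll P).support := by
  induction m with
  | zero => rw [Fin.fin_one_eq_zero i]; exact start_mem_support _
  | succ m ih =>
    refine (mem_support_append_iff _ _).mpr ?_
    cases i using Fin.cases with
    | zero => exact Or.inl (start_mem_support _)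
    | succ i => exact Or.inr (ih (v := fun i => v i.succ) _ i)

lemma isTrail_appendAll {m : ℕ} {v : Fin (m + 1) → V}
    {P : (i : Fin m) → G.Walk (v i.castSucc) (v i.succ)} (hP : ∀ i, (P i).IsTrail)
    (hdisj : ∀ i j, i ≠ j → (P i).edges.Disjoint (P j).edges) :
    (appendAll P).IsTrail := by
  rw [isTrail_def, edges_appendAll, List.nodup_flatten, List.pairwise_ofFn]
  refine ⟨?_, fun i j hij => hdisj i j hij.ne⟩
  simp only [List.mem_ofFn, forall_exists_index]
  rintro _ i rfl
  exact (hP i).edges_nodup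

def segment {u v : V} (p : G.Walk u v) (i j : ℕ) (hij : i ≤ j) :
    G.Walk (p.getVert i) (p.getVert j) :=
  ((p.drop i).take (j - i)).copy rfl (by rw [drop_getVert, Nat.add_sub_cancel' hij])

lemma edges_segment {u v : V} (p : G.Walk u v) {i j : ℕ} (hij : i ≤ j) :
    (p.segment i j hij).edges = (p.edges.take j).drop i := by
  simp [segment, edges_take, edges_drop, List.drop_take]

lemma IsTrail.segment {u v : V} {p : G.Walk u v} (hp : p.IsTrail) {i j : ℕ} (hij : i ≤ j) :
    (p.segment i j hij).IsTrail := by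
  rw [isTrail_def, edges_segment]
  exact hp.edges_nodup.sublist ((List.drop_sublist _ _).trans (List.take_sublist _ _))

lemma IsTrail.disjoint_edges_segment {u v : V} {p : G.Walk u v} (hp : p.IsTrail)
    {i j k l : ℕ} (hij : i ≤ j) (hjk : j ≤ k) (hkl : k ≤ l) :
    (p.segment i j hij).edges.Disjoint (p.segment k l hkl).edges := by
  rw [edges_segment, edges_segment]
  exact List.disjoint_of_subset_left (List.drop_sublist _ _).subset
    (List.disjoint_of_subset_right ((List.take_sublist _ _).drop k).subset
      (List.disjoint_take_drop hp.edges_nodup hjk))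

end SimpleGraph.Walk

theorem Function.Surjective.exists_strictMono_bijective_comp {α β : Type*} [Fintype α]
    [LinearOrder β] {f : β → α} (hf : f.Surjective) :
    ∃ t : Fin (Fintype.card α) → β, StrictMono t ∧ (f ∘ t).Bijective := by
  classical
  obtain ⟨idx, hf_idx⟩ := hf.hasRightInverse
  have hcard : (Finset.univ.image idx).card = Fintype.card α :=
    Finset.card_image_of_injective _ hf_idx.injective
  set t := (Finset.univ.image idx).orderEmbOfFin hcard
  have ht : ∀ i, idx (f (t i)) = t i := fun i => by
    obtain ⟨x, -, hx⟩ := Finset.mem_image.mp (Finset.orderEmbOfFin_mem _ hcard i)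
    rw [← hx, hf_idx x]
  refine ⟨t, t.strictMono, fun i j hij => ?_, fun x => ?_⟩
  · exact t.injective (by rw [← ht i, ← ht j]; exact congrArg idx hij)
  · obtain ⟨i, hi⟩ : idx x ∈ Set.range t := by simp [t, Finset.range_orderEmbOfFin]
    exact ⟨i, by simp [hi, hf_idx x]⟩

/-- Let `G` be a finite simple graph on vertex set `V` with `n = |V| ≥ 1`.  The following
are equivalent:
(a) there exist a bijection `v : Fin n → V` and, for each index `i < n - 1`, a trail `P i`
in `G` from `v i` to `v (i+1)`, such that the edge sets of the `P i` are pairwise disjoint;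
(b) `G` contains a trail whose support contains every vertex of `V`. -/
theorem path_embedding_iff_spanning_trail
    {V : Type*} [Fintype V] (G : SimpleGraph V)
    (n : ℕ) (hn : n = Fintype.card V) (hn1 : 1 ≤ n) :
    (∃ v : Fin n → V, Function.Bijective v ∧
      ∃ P : (i : Fin (n - 1)) →
          G.Walk (v ⟨i.val, by have := i.isLt; omega⟩) (v ⟨i.val + 1, by have := i.isLt; omega⟩),
        (∀ i, (P i).IsTrail) ∧
        (∀ i j, i ≠ j → ∀ e, e ∈ (P i).edges → e ∉ (P j).edges)) ↔
    (∃ (a b : V) (w : G.Walk a b), w.IsTrail ∧ ∀ x : V, x ∈ w.support) := by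
  constructor
  · rintro ⟨v, hv, P, hP, hdisj⟩
    obtain ⟨m, rfl⟩ : ∃ m, n = m + 1 := ⟨n - 1, by omega⟩
    refine ⟨_, _, SimpleGraph.Walk.appendAll P, SimpleGraph.Walk.isTrail_appendAll hP hdisj,
      fun x => ?_⟩
    obtain ⟨i, rfl⟩ := hv.2 x
    exact SimpleGraph.Walk.mem_support_appendAll P i
  · rintro ⟨a, b, w, hw, hcover⟩
    have hsurj : w.getVert.Surjective := fun x =>
      (SimpleGraph.Walk.mem_support_iff_exists_getVert.mp (hcover x)).imp fun _ h => h.1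
    obtain ⟨t, ht, hbij⟩ := hsurj.exists_strictMono_bijective_comp
    subst hn
    refine ⟨_, hbij, fun i => w.segment _ _ (ht.monotone (Nat.le_succ i.val)),
      fun i => hw.segment _, fun i j hij => ?_⟩
    rcases lt_or_gt_of_ne (Fin.val_ne_of_ne hij) with h | h
    · exact hw.disjoint_edges_segment _ (ht.monotone h) _
    · exact (hw.disjoint_edges_segment _ (ht.monotone h) _).symm
end

section
/- Let G be a finite simple graph on a vertex set V with |V| ≥ 2. For distinct u, v ∈ V, let G_{uv} denote the simple graph on V ∪ {⋆}, where ⋆ is a new vertex (e.g., vertices of type Option V), whose edges are the edges of G together with the two edges {⋆, u} and {⋆, v}. Then G contains a trail whose support contains every vertex of G if and only if there exist distinct vertices u, v ∈ V such that G_{uv} contains a closed trail whose support contains every vertex of G_{uv}. -/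
/-- Given a simple graph `G` on `V` and `u v : V`, the graph `G_{uv}` on `Option V`
obtained from `G` by adding a new vertex `⋆ = none` joined exactly to `u` and `v`. -/
def SimpleGraph.addApex {V : Type*} (G : SimpleGraph V) (u v : V) :
    SimpleGraph (Option V) where
  Adj x y :=
    (∃ a b, G.Adj a b ∧ x = some a ∧ y = some b) ∨
    (x = none ∧ (y = some u ∨ y = some v)) ∨
    (y = none ∧ (x = some u ∨ x = some v))
  symm := by
    constructor
    rintro x y (⟨a, b, hab, rfl, rfl⟩ | ⟨rfl, h⟩ | ⟨rfl, h⟩)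
    · exact Or.inl ⟨b, a, hab.symm, rfl, rfl⟩
    · exact Or.inr (Or.inr ⟨rfl, h⟩)
    · exact Or.inr (Or.inl ⟨rfl, h⟩)
  loopless := by
    constructor
    rintro x (⟨a, b, hab, rfl, hx⟩ | ⟨rfl, h | h⟩ | ⟨rfl, h | h⟩) <;> simp_all

/-!
A spanning trail of `G` can be taken to have distinct ends `u ≠ v` (a closed one is opened at
its first edge, which exists since `|V| ≥ 2`); then `⋆ → u ⇝ v → ⋆` is a spanning closed trail
of `G_{uv}`. Conversely, rotate a spanning closed trail of `G_{uv}` to start at `⋆`. As `⋆` has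
only two neighbours, its first and last edges are the only edges at `⋆`, so what lies between
them avoids `⋆` and is a spanning trail of `G`.
-/

namespace SimpleGraph

variable {V W : Type*}

namespace Walk

variable {G : SimpleGraph V} {H : SimpleGraph W} {x a b : W}

theorem IsTrail.exists_ne_of_forall_mem_support [Nontrivial V] {u v : V} {w : G.Walk u v}
    (hw : w.IsTrail) (hs : ∀ x, x ∈ w.support) :
    ∃ a b, a ≠ b ∧ ∃ w' : G.Walk a b, w'.IsTrail ∧ ∀ x, x ∈ w'.support := by
  by_cases huv : u = v
  · subst huv
    cases w with
    | nil =>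
      obtain ⟨x, hx⟩ := exists_ne u
      exact absurd (by simpa using hs x) hx
    | cons h p =>
      refine ⟨_, _, h.ne.symm, p, hw.of_cons, fun x => ?_⟩
      rcases List.mem_cons.mp (hs x) with rfl | hx
      exacts [p.end_mem_support, hx]
  · exact ⟨u, v, huv, w, hw, hs⟩

theorem IsTrail.cons_concat {p : H.Walk a b} (hp : p.IsTrail) (hab : a ≠ b) (hx : x ∉ p.support)
    (ha : H.Adj x a) (hb : H.Adj b x) : (cons ha (p.concat hb)).IsTrail := by
  have hxp : ∀ t, s(x, t) ∉ p.edges := fun t ht => hx (p.fst_mem_support_of_mem_edges ht)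
  rw [isTrail_cons, concat_eq_append, isTrail_append]
  refine ⟨⟨hp, by simp, ?_⟩, ?_⟩
  · simpa [Sym2.eq_swap] using hxp b
  · simpa [hxp, Sym2.eq_swap] using ⟨hab, fun _ => ha.ne.symm⟩

theorem exists_eq_cons_concat {c : H.Walk x x} (hc : ¬ c.Nil) :
    ∃ (z y : W) (hz : H.Adj x z) (m : H.Walk z y) (hy : H.Adj y x),
      c = cons hz (m.concat hy) := by
  cases c with
  | nil => exact absurd .nil hc
  | cons hz r =>
    cases r with
    | nil => exact absurd rfl hz.ne
    | cons h r =>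
      obtain ⟨y, m, hy, hm⟩ := exists_cons_eq_concat h r
      exact ⟨_, y, hz, m, hy, by rw [hm]⟩

theorem IsTrail.notMem_support_of_cons_concat {z y p q : W} {hz : H.Adj x z}
    {m : H.Walk z y} {hy : H.Adj y x} (hc : (cons hz (m.concat hy)).IsTrail)
    (hx : ∀ t, H.Adj x t → t = p ∨ t = q) : x ∉ m.support := by
  rw [isTrail_def, edges_cons, edges_concat, List.concat_eq_append, List.nodup_cons] at hc
  obtain ⟨hxz, hm⟩ := hc
  have hyx : s(y, x) ∉ m.edges := fun h => by simpa using List.disjoint_of_nodup_append hm h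
  have hzy : z ≠ y := by rintro rfl; simp [Sym2.eq_swap] at hxz
  intro hxm
  obtain hxy | ⟨e, he, hxe⟩ := mem_support_iff_exists_mem_edges.mp hxm
  · exact hy.ne hxy.symm
  obtain ⟨t, rfl⟩ := Sym2.mem_iff_exists.mp hxe
  have ht : t = z ∨ t = y := by
    rcases hx t (m.adj_of_mem_edges he) with rfl | rfl <;>
    rcases hx z hz with rfl | rfl <;> rcases hx y hy.symm with rfl | rfl <;> simp_all
  rcases ht with rfl | rfl
  · exact hxz (List.mem_append_left _ he)
  · exact hyx (Sym2.eq_swap ▸ he)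

end Walk

theorem Embedding.exists_walk_map_eq {G : SimpleGraph V} {H : SimpleGraph W} (f : G ↪g H)
    {a b : V} (p : H.Walk (f a) (f b)) (hp : ∀ x ∈ p.support, x ∈ Set.range f) :
    ∃ q : G.Walk a b, q.map f.toHom = p := by
  suffices ∀ {x y : W} (p : H.Walk x y), (∀ x ∈ p.support, x ∈ Set.range f) →
      ∀ a b (hx : f a = x) (hy : f b = y), ∃ q : G.Walk a b, (q.map f.toHom).copy hx hy = p from
    this p hp a b rfl rfl
  intro x y p hp
  induction p with
  | nil =>
    rintro a b rfl hb
    obtain rfl := f.injective hb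
    exact ⟨.nil, rfl⟩
  | cons h p ih =>
    rintro a b rfl rfl
    obtain ⟨c, rfl⟩ := hp _ (List.mem_cons_of_mem _ p.start_mem_support)
    obtain ⟨q, hq⟩ := ih (fun x hx => hp x (List.mem_cons_of_mem _ hx)) c b rfl rfl
    exact ⟨.cons (f.map_adj_iff.mp h) q, by simpa using hq⟩

variable {G : SimpleGraph V} {u v : V}

@[simp]
theorem addApex_adj_some_some {a b : V} : (G.addApex u v).Adj (some a) (some b) ↔ G.Adj a b := by
  simp [addApex]

@[simp]
theorem addApex_adj_none {x : Option V} :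
    (G.addApex u v).Adj none x ↔ x = some u ∨ x = some v := by
  simp [addApex]

variable (G u v) in
def embeddingAddApex : G ↪g G.addApex u v where
  toEmbedding := Function.Embedding.some
  map_rel_iff' := addApex_adj_some_some

@[simp]
theorem embeddingAddApex_apply (a : V) : embeddingAddApex G u v a = some a := rfl

theorem exists_apex_spanning_closed_trail_of_spanning_trail (huv : u ≠ v) {w : G.Walk u v}
    (hw : w.IsTrail) (hs : ∀ x, x ∈ w.support) :
    ∃ c : (G.addApex u v).Walk none none, c.IsTrail ∧ ∀ x, x ∈ c.support := by
  let ι := embeddingAddApex G u v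
  have hu : (G.addApex u v).Adj none (ι u) := by simp [ι]
  have hv : (G.addApex u v).Adj (ι v) none := (G.addApex u v).adj_symm (by simp [ι])
  refine ⟨.cons hu ((w.map ι.toHom).concat hv), ?_, ?_⟩
  · refine (hw.map ι.injective).cons_concat (by simpa [ι] using huv) ?_ hu hv
    rw [Walk.support_map]
    simp [ι]
  · rintro (_ | x)
    · simp
    · rw [Walk.support_cons, Walk.support_concat, Walk.support_map]
      simp [ι, hs x]

theorem exists_spanning_trail_of_apex_spanning_closed_trail {a : Option V}
    {c : (G.addApex u v).Walk a a} (hc : c.IsTrail) (hs : ∀ x, x ∈ c.support) :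
    ∃ (a b : V) (w : G.Walk a b), w.IsTrail ∧ ∀ x, x ∈ w.support := by
  classical
  have hc' := hc.rotate (hs none)
  have hs' := fun x => (c.mem_support_rotate_iff none (hs none)).mpr (hs x)
  generalize c.rotate none (hs none) = c at hc' hs'
  have hnil : ¬ c.Nil := fun h => by simpa [Walk.nil_iff_support_eq.mp h] using hs' (some u)
  obtain ⟨z, y, hz, m, hy, rfl⟩ := Walk.exists_eq_cons_concat hnil
  have hm : ∀ x ∈ m.support, x ∈ Set.range (embeddingAddApex G u v) := by
    have := hc'.notMem_support_of_cons_concat fun t => addApex_adj_none.mp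
    rintro (_ | x) hx
    exacts [absurd hx this, ⟨x, rfl⟩]
  obtain ⟨a, rfl⟩ := hm z m.start_mem_support
  obtain ⟨b, rfl⟩ := hm y m.end_mem_support
  obtain ⟨w, rfl⟩ := (embeddingAddApex G u v).exists_walk_map_eq m hm
  refine ⟨a, b, w, ?_, fun x => ?_⟩
  · rw [Walk.isTrail_cons, Walk.concat_eq_append, Walk.isTrail_append] at hc'
    exact hc'.1.1.of_map
  · have hx := hs' (some x)
    rw [Walk.support_cons, Walk.support_concat, Walk.support_map] at hx
    simpa using hx

end SimpleGraph

/-- Let `G` be a finite simple graph on a vertex set `V` with `|V| ≥ 2`.  Then `G` contains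
a trail whose support contains every vertex of `G` if and only if there exist distinct
vertices `u ≠ v` such that `G_{uv}` (obtained by adding a new vertex adjacent exactly to
`u` and `v`) contains a closed trail whose support contains every vertex of `G_{uv}`. -/
theorem spanning_trail_iff_exists_apex_spanning_closed_trail
    {V : Type*} [Fintype V] (G : SimpleGraph V) (hV : 2 ≤ Fintype.card V) :
    (∃ (a b : V) (w : G.Walk a b), w.IsTrail ∧ ∀ x : V, x ∈ w.support) ↔
    (∃ u v : V, u ≠ v ∧
      ∃ (a : Option V) (w : (G.addApex u v).Walk a a),
        w.IsTrail ∧ ∀ x : Option V, x ∈ w.support) := by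
  constructor
  · rintro ⟨a, b, w, hw, hs⟩
    have : Nontrivial V := Fintype.one_lt_card_iff_nontrivial.mp hV
    obtain ⟨u, v, huv, w, hw, hs⟩ := hw.exists_ne_of_forall_mem_support hs
    exact ⟨u, v, huv, none,
      SimpleGraph.exists_apex_spanning_closed_trail_of_spanning_trail huv hw hs⟩
  · rintro ⟨u, v, -, a, c, hc, hs⟩
    exact SimpleGraph.exists_spanning_trail_of_apex_spanning_closed_trail hc hs
end

section
/- Let G be a finite simple graph on a vertex set V and let v ∈ V. Let G* denote the simple graph on V ∪ {u₁, u₂}, where u₁ and u₂ are two new vertices (e.g., vertices of type V ⊕ Fin 2), whose edges are the edges of G together with the two edges {u₁, v} and {u₂, v}. Then G contains a closed trail whose support contains every vertex of G if and only if G* contains a trail whose support contains every vertex of G*. -/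
/-
A closed trail of `G` through every vertex can be rotated to start at `v`; entering it from `u₁` and
leaving it to `u₂` gives a spanning trail of `G*`. Conversely, a pendant vertex has only one
neighbour, so a trail can visit it only at an end. A spanning trail of `G*` therefore runs from one
pendant vertex to the other, and deleting its first and last edge leaves a closed trail at `v` that
avoids the pendant vertices, i.e. a spanning closed trail of `G`.
-/

/-- Given a simple graph `G` on `V` and `v : V`, the graph `G*` on `V ⊕ Fin 2` obtained
from `G` by adding two new pendant vertices `u₁ = inr 0` and `u₂ = inr 1`, each joined
exactly to `v`. -/
def SimpleGraph.addTwoPendants {V : Type*} (G : SimpleGraph V) (v : V) :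
    SimpleGraph (V ⊕ Fin 2) where
  Adj x y :=
    (∃ a b, G.Adj a b ∧ x = Sum.inl a ∧ y = Sum.inl b) ∨
    (∃ i : Fin 2, x = Sum.inr i ∧ y = Sum.inl v) ∨
    (∃ i : Fin 2, y = Sum.inr i ∧ x = Sum.inl v)
  symm := by
    constructor
    rintro x y (⟨a, b, hab, rfl, rfl⟩ | ⟨i, rfl, rfl⟩ | ⟨i, rfl, rfl⟩)
    · exact Or.inl ⟨b, a, hab.symm, rfl, rfl⟩
    · exact Or.inr (Or.inr ⟨i, rfl, rfl⟩)
    · exact Or.inr (Or.inl ⟨i, rfl, rfl⟩)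
  loopless := by
    constructor
    rintro x (⟨a, b, hab, rfl, hx⟩ | ⟨i, rfl, hx⟩ | ⟨i, hx, rfl⟩) <;> simp_all

namespace SimpleGraph

open Walk

variable {V W : Type*}

namespace Walk

variable {G : SimpleGraph V} {H : SimpleGraph W}

-- All edges of `w` at `x` are copies of `s(x, y)`, so there is exactly one of them; but an inner
-- vertex of a trail lies on an even number of its edges.
theorem IsTrail.eq_or_eq_of_forall_adj_eq {a b x y : W} {w : H.Walk a b} (hw : w.IsTrail)
    (hx : x ∈ w.support) (hxy : ∀ z, H.Adj x z → z = y) : x = a ∨ x = b := by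
  classical
  by_contra! hab
  have hcount : w.edges.countP (x ∈ ·) = w.edges.count s(x, y) := by
    rw [List.count_eq_countP]
    refine List.countP_congr fun e he => ?_
    simp only [decide_eq_true_eq, beq_iff_eq]
    refine ⟨fun hxe => ?_, fun h => h ▸ Sym2.mem_mk_left x y⟩
    have hadj : H.Adj x (Sym2.Mem.other hxe) := by
      rw [← SimpleGraph.mem_edgeSet, Sym2.other_spec hxe]
      exact w.edges_subset_edgeSet he
    rw [← Sym2.other_spec hxe, hxy _ hadj]
  have hpos : 0 < w.edges.countP (x ∈ ·) := by
    obtain ⟨e, he, hxe⟩ := (mem_support_iff_exists_mem_edges.1 hx).resolve_left hab.2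
    exact List.countP_pos_iff.2 ⟨e, he, by simpa using hxe⟩
  have heven : Even (w.edges.countP (x ∈ ·)) :=
    (hw.even_countP_edges_iff x).2 fun _ => hab
  have hle := hw.count_edges_le_one s(x, y)
  rw [← hcount] at hle
  obtain ⟨k, hk⟩ := heven
  omega

theorem exists_map_eq_of_forall_mem_range (f : G ↪g H) {x y : V} (w : H.Walk (f x) (f y))
    (hw : ∀ z ∈ w.support, z ∈ Set.range f) : ∃ p : G.Walk x y, p.map f.toHom = w := by
  suffices ∀ {a b} (w : H.Walk a b) (x y : V) (ha : f x = a) (hb : f y = b),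
      (∀ z ∈ w.support, z ∈ Set.range f) → ∃ p : G.Walk x y, (p.map f.toHom).copy ha hb = w from
    this w x y rfl rfl hw
  intro a b w
  induction w with
  | nil =>
    rintro x y rfl hb -
    obtain rfl := f.injective hb
    exact ⟨nil, rfl⟩
  | cons h q ih =>
    rintro x y rfl rfl hw
    obtain ⟨z, rfl⟩ := hw _ (List.mem_cons_of_mem _ q.start_mem_support)
    obtain ⟨p, hp⟩ := ih z y rfl rfl fun z hz => hw z (by simp [hz])
    exact ⟨cons (f.map_adj_iff.1 h) p, by simpa using hp⟩

end Walk

variable {G : SimpleGraph V} {v : V}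

@[simp]
theorem addTwoPendants_adj_inl_inl {a b : V} :
    (G.addTwoPendants v).Adj (.inl a) (.inl b) ↔ G.Adj a b := by
  simp [addTwoPendants]

@[simp]
theorem addTwoPendants_adj_inr_left {i : Fin 2} {x : V ⊕ Fin 2} :
    (G.addTwoPendants v).Adj (.inr i) x ↔ x = .inl v := by
  fin_cases i <;> simp [addTwoPendants]

@[simp]
theorem addTwoPendants_adj_inr_right {i : Fin 2} {x : V ⊕ Fin 2} :
    (G.addTwoPendants v).Adj x (.inr i) ↔ x = .inl v := by
  rw [adj_comm, addTwoPendants_adj_inr_left]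

variable (G v) in
def addTwoPendantsEmbedding : G ↪g G.addTwoPendants v where
  toEmbedding := .inl
  map_rel_iff' := addTwoPendants_adj_inl_inl

@[simp]
theorem addTwoPendantsEmbedding_apply (x : V) : addTwoPendantsEmbedding G v x = .inl x := rfl

namespace Walk

-- The middle vertex is named through the embedding (not as `.inl v`) so that the two pieces of
-- the walk agree syntactically; otherwise `rw` and `simp` cannot see through `cons`.
def attachPendants (c : G.Walk v v) (i j : Fin 2) : (G.addTwoPendants v).Walk (.inr i) (.inr j) :=
  cons (v := addTwoPendantsEmbedding G v v) (addTwoPendants_adj_inr_left.2 rfl)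
    ((c.map (addTwoPendantsEmbedding G v).toHom).concat (addTwoPendants_adj_inr_right.2 rfl))

@[simp]
theorem support_attachPendants (c : G.Walk v v) (i j : Fin 2) :
    (c.attachPendants i j).support = .inr i :: (c.support.map .inl ++ [.inr j]) := by
  rw [attachPendants, support_cons, support_concat, support_map]
  rfl

theorem isTrail_attachPendants_iff {c : G.Walk v v} {i j : Fin 2} (hij : i ≠ j) :
    (c.attachPendants i j).IsTrail ↔ c.IsTrail := by
  have hmap : (c.map (addTwoPendantsEmbedding G v).toHom).IsTrail ↔ c.IsTrail :=
    isTrail_map_iff_of_injective (addTwoPendantsEmbedding G v).injective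
  have hpendant (k : Fin 2) : .inr k ∉ (c.map (addTwoPendantsEmbedding G v).toHom).support := by
    rw [support_map]
    simp
  have hfirst : s(.inr i, .inl v) ∉ (c.map (addTwoPendantsEmbedding G v).toHom).edges :=
    fun h => hpendant i (fst_mem_support_of_mem_edges _ h)
  have hlast : s(.inl v, .inr j) ∉ (c.map (addTwoPendantsEmbedding G v).toHom).edges :=
    fun h => hpendant j (snd_mem_support_of_mem_edges _ h)
  rw [attachPendants, isTrail_cons, concat_eq_append, isTrail_append, hmap, edges_append,
    edges_cons, edges_nil]
  refine ⟨fun h => h.1.1, fun hc => ⟨⟨hc, ?_, List.disjoint_singleton.2 hlast⟩, ?_⟩⟩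
  · exact (isTrail_cons _ _).2 ⟨.nil, List.not_mem_nil⟩
  rw [List.mem_append, List.mem_singleton, not_or]
  exact ⟨hfirst, by simp [hij]⟩

theorem exists_isTrail_attachPendants_eq {i j : Fin 2} (hij : i ≠ j)
    (w : (G.addTwoPendants v).Walk (.inr i) (.inr j)) (hw : w.IsTrail) :
    ∃ c : G.Walk v v, c.IsTrail ∧ c.attachPendants i j = w := by
  cases w with
  | nil => exact absurd rfl hij
  | cons h q =>
  obtain rfl := addTwoPendants_adj_inr_left.1 h
  cases q with
  | cons h' q =>
  obtain ⟨x, r, h'', hq⟩ := exists_cons_eq_concat h' q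
  obtain rfl := addTwoPendants_adj_inr_right.1 h''
  have hr : r.IsTrail := by
    rw [hq, isTrail_cons, concat_eq_append] at hw
    exact hw.1.of_append_left
  have hrange : ∀ z ∈ r.support, z ∈ Set.range (addTwoPendantsEmbedding G v) := by
    rintro (z | k) hz
    · exact ⟨z, rfl⟩
    · simpa using hr.eq_or_eq_of_forall_adj_eq hz fun _ => addTwoPendants_adj_inr_left.1
  obtain ⟨c, rfl⟩ := exists_map_eq_of_forall_mem_range (addTwoPendantsEmbedding G v) r hrange
  have hw' : c.attachPendants i j = cons h (cons h' q) := by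
    rw [hq]
    rfl
  exact ⟨c, (isTrail_attachPendants_iff hij).1 (hw' ▸ hw), hw'⟩

end Walk

end SimpleGraph

open SimpleGraph Walk

theorem spanning_closed_trail_iff_pendant_spanning_trail_general
    {V : Type*} (G : SimpleGraph V) (v : V) :
    (∃ (a : V) (w : G.Walk a a), w.IsTrail ∧ ∀ x : V, x ∈ w.support) ↔
    (∃ (a b : V ⊕ Fin 2) (w : (G.addTwoPendants v).Walk a b),
      w.IsTrail ∧ ∀ x : V ⊕ Fin 2, x ∈ w.support) := by
  classical
  constructor
  · rintro ⟨a, w, hw, hspan⟩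
    refine ⟨.inr 0, .inr 1, (w.rotate v (hspan v)).attachPendants 0 1,
      (isTrail_attachPendants_iff zero_ne_one).2 (hw.rotate _), ?_⟩
    rintro (x | k)
    · simp [hspan x]
    · fin_cases k <;> simp
  · rintro ⟨a, b, w, hw, hspan⟩
    have hends (k : Fin 2) : .inr k = a ∨ .inr k = b :=
      hw.eq_or_eq_of_forall_adj_eq (hspan _) fun _ => addTwoPendants_adj_inr_left.1
    obtain ⟨i, j, hij, rfl, rfl⟩ : ∃ i j : Fin 2, i ≠ j ∧ a = .inr i ∧ b = .inr j := by
      rcases hends 0 with rfl | rfl <;> rcases hends 1 with h | h <;> simp_all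
    obtain ⟨c, hc, rfl⟩ := exists_isTrail_attachPendants_eq hij w hw
    exact ⟨v, c, hc, fun x => by simpa using hspan (.inl x)⟩

/-- Let `G` be a finite simple graph on a vertex set `V` and let `v ∈ V`.  Then `G`
contains a closed trail whose support contains every vertex of `G` if and only if `G*`
(obtained by attaching two new pendant vertices to `v`) contains a trail whose support
contains every vertex of `G*`. -/
theorem spanning_closed_trail_iff_pendant_spanning_trail
    {V : Type*} [Fintype V] (G : SimpleGraph V) (v : V) :
    (∃ (a : V) (w : G.Walk a a), w.IsTrail ∧ ∀ x : V, x ∈ w.support) ↔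
    (∃ (a b : V ⊕ Fin 2) (w : (G.addTwoPendants v).Walk a b),
      w.IsTrail ∧ ∀ x : V ⊕ Fin 2, x ∈ w.support) :=
  spanning_closed_trail_iff_pendant_spanning_trail_general G v
end

section
/- Fix L ≥ 1 and lengths l_1, …, l_k ≥ 1, and let P be the path graph on vertices {0, 1, …, L} in which i and i+1 are adjacent for all i < L. Say the k path requests are simultaneously embeddable on P if for each j ∈ {1, …, k} there exist an injective map f_j : {0, …, l_j} → {0, …, L} and, for each t < l_j, a trail Q_{j,t} in P from f_j(t) to f_j(t+1), such that (i) across all j and t the trails Q_{j,t} have pairwise disjoint edge sets, and (ii) every vertex i ∈ {0, …, L} satisfies |{(j,t) : f_j(t) = i}| ≤ 2. Then the k path requests are simultaneously embeddable on P if and only if l_1 + l_2 + ⋯ + l_k ≤ L. -/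
/-!
Each virtual link is routed along a nonempty trail (its endpoints are distinct), and these trails
are edge-disjoint, so choosing one edge of each trail injects the `∑ j, l j` virtual links into
the `L` edges of the path. Conversely, lay the requests out one after another: request `j`
occupies the vertices `s j, …, s j + l j` with `s j = l 0 + ⋯ + l (j - 1)`, each virtual link
taking a single edge. Consecutive requests share only their junction vertex, and since every
`l j ≥ 1` distinct junctions are distinct vertices, so each vertex hosts at most two virtual
nodes.
-/

open Finset

namespace SimpleGraph

lemma card_le_natCard_edgeSet_of_edges_disjoint {V ι : Type*} [Finite ι] {G : SimpleGraph V}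
    [Finite G.edgeSet] {u v : ι → V} (W : ∀ i, G.Walk (u i) (v i)) (huv : ∀ i, u i ≠ v i)
    (hW : ∀ i j, i ≠ j → ∀ e ∈ (W i).edges, e ∉ (W j).edges) :
    Nat.card ι ≤ Nat.card G.edgeSet := by
  have hne i : (W i).edges ≠ [] := by
    rw [Ne, Walk.edges_eq_nil]
    exact Walk.not_nil_of_ne (huv i)
  let e i : G.edgeSet :=
    ⟨(W i).edges.head (hne i), (W i).edges_subset_edgeSet (List.head_mem _)⟩
  refine Nat.card_le_card_of_injective e fun i j hij => ?_
  by_contra h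
  have hj : (e i).val ∈ (W j).edges := by
    rw [hij]
    exact List.head_mem _
  exact hW i j h _ (List.head_mem _) hj

lemma natCard_edgeSet_pathGraph (n : ℕ) : Nat.card (pathGraph (n + 1)).edgeSet = n := by
  let e (i : Fin n) : (pathGraph (n + 1)).edgeSet :=
    ⟨s(i.castSucc, i.succ), pathGraph_adj.2 (Or.inl (by simp))⟩
  have he : Function.Bijective e := by
    refine ⟨fun i j hij => ?_, ?_⟩
    · have := Subtype.ext_iff.1 hij
      simp only [e, Sym2.eq_iff, Fin.ext_iff, Fin.val_castSucc, Fin.val_succ] at this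
      omega
    · rintro ⟨x, hx⟩
      induction x using Sym2.inductionOn with
      | hf a b =>
        rcases pathGraph_adj.1 ((mem_edgeSet _).1 hx) with h | h
        · exact ⟨⟨a, by omega⟩, Subtype.ext (Sym2.eq_iff.2 (Or.inl ⟨rfl, Fin.ext h⟩))⟩
        · exact ⟨⟨b, by omega⟩, Subtype.ext (Sym2.eq_iff.2 (Or.inr ⟨rfl, Fin.ext h⟩))⟩
  rw [← Nat.card_eq_of_bijective e he, Nat.card_eq_fintype_card, Fintype.card_fin]

end SimpleGraph

section BlockStart

variable {ι : Type*} [LinearOrder ι] [LocallyFiniteOrderBot ι] (l : ι → ℕ)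

def blockStart (j : ι) : ℕ := ∑ i ∈ Iio j, l i

lemma blockStart_add_eq_sum_Iic (j : ι) : blockStart l j + l j = ∑ i ∈ Iic j, l i := by
  rw [Iic_eq_cons_Iio, sum_cons, blockStart, add_comm]

lemma blockStart_add_le_of_lt {j j' : ι} (h : j < j') :
    blockStart l j + l j ≤ blockStart l j' := by
  rw [blockStart_add_eq_sum_Iic]
  exact sum_le_sum_of_subset fun i hi => mem_Iio.2 ((mem_Iic.1 hi).trans_lt h)

lemma blockStart_add_le_sum [Fintype ι] (j : ι) : blockStart l j + l j ≤ ∑ i, l i := by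
  rw [blockStart_add_eq_sum_Iic]
  exact sum_le_sum_of_subset (subset_univ _)

variable {l}

lemma eq_and_eq_zero_of_blockStart_add_eq_of_lt {j j' : ι} {t t' : ℕ} (hj : j < j')
    (ht : t ≤ l j) (h : blockStart l j + t = blockStart l j' + t') : t = l j ∧ t' = 0 := by
  have := blockStart_add_le_of_lt l hj
  omega

lemma eq_of_blockStart_add_eq_of_lt_of_lt {j j' : ι} {t t' : ℕ} (ht : t < l j) (ht' : t' < l j')
    (h : blockStart l j + t = blockStart l j' + t') : j = j' ∧ t = t' := by
  rcases lt_trichotomy j j' with hj | rfl | hj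
  · exact absurd (eq_and_eq_zero_of_blockStart_add_eq_of_lt hj ht.le h).1 ht.ne
  · exact ⟨rfl, by omega⟩
  · exact absurd (eq_and_eq_zero_of_blockStart_add_eq_of_lt hj ht'.le h.symm).1 ht'.ne

/-- With positive block lengths two blocks meet only at the last point of one and the first point
of the next, so a position and whether it starts its block determine the block. -/
lemma eq_of_blockStart_add_eq (hl : ∀ j, 1 ≤ l j) {j j' : ι} {t t' : ℕ} (ht : t ≤ l j)
    (ht' : t' ≤ l j') (h : blockStart l j + t = blockStart l j' + t') (h0 : t = 0 ↔ t' = 0) :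
    j = j' ∧ t = t' := by
  rcases lt_trichotomy j j' with hj | rfl | hj
  · obtain ⟨rfl, rfl⟩ := eq_and_eq_zero_of_blockStart_add_eq_of_lt hj ht h
    have := hl j
    omega
  · exact ⟨rfl, by omega⟩
  · obtain ⟨rfl, rfl⟩ := eq_and_eq_zero_of_blockStart_add_eq_of_lt hj ht' h.symm
    have := hl j'
    omega

end BlockStart

open SimpleGraph

def PathsEmbeddableOnPath (L k : ℕ) (l : Fin k → ℕ) : Prop :=
  ∃ f : (j : Fin k) → Fin (l j + 1) → Fin (L + 1),
    (∀ j, Function.Injective (f j)) ∧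
    ∃ Q : (j : Fin k) → (t : Fin (l j)) →
        (SimpleGraph.pathGraph (L + 1)).Walk (f j t.castSucc) (f j t.succ),
      (∀ j t, (Q j t).IsTrail) ∧
      (∀ (j : Fin k) (t : Fin (l j)) (j' : Fin k) (t' : Fin (l j')),
        (⟨j, t⟩ : (j : Fin k) × Fin (l j)) ≠ ⟨j', t'⟩ →
        ∀ e, e ∈ (Q j t).edges → e ∉ (Q j' t').edges) ∧
      (∀ i : Fin (L + 1),
        (Finset.univ.filter
          (fun p : (j : Fin k) × Fin (l j + 1) => f p.1 p.2 = i)).card ≤ 2)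

variable {L k : ℕ} {l : Fin k → ℕ}

theorem PathsEmbeddableOnPath.sum_le (h : PathsEmbeddableOnPath L k l) : ∑ j, l j ≤ L := by
  obtain ⟨f, hf, Q, -, hQ, -⟩ := h
  have := card_le_natCard_edgeSet_of_edges_disjoint (fun p : (j : Fin k) × Fin (l j) => Q p.1 p.2)
    (fun p => (hf p.1).ne Fin.castSucc_lt_succ.ne) fun p q hpq => hQ p.1 p.2 q.1 q.2 hpq
  rw [natCard_edgeSet_pathGraph, Nat.card_sigma] at this
  simpa using this

theorem pathsEmbeddableOnPath_of_sum_le (hl : ∀ j, 1 ≤ l j) (hsum : ∑ j, l j ≤ L) :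
    PathsEmbeddableOnPath L k l := by
  let f j (t : Fin (l j + 1)) : Fin (L + 1) :=
    ⟨blockStart l j + t, by have := blockStart_add_le_sum l j; omega⟩
  have hadj j (t : Fin (l j)) : (pathGraph (L + 1)).Adj (f j t.castSucc) (f j t.succ) :=
    pathGraph_adj.2 (Or.inl (by simp [f, add_assoc]))
  refine ⟨f, fun j t t' htt' => Fin.ext (by simpa [f, Fin.ext_iff] using htt'),
    fun j t => (hadj j t).toWalk, fun j t => (hadj j t).isPath_toWalk.isTrail, ?_, fun i => ?_⟩
  · intro j t j' t' hne e he he'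
    rw [Adj.edges_toWalk, List.mem_singleton] at he he'
    have hstart : blockStart l j + t = blockStart l j' + t' := by
      have := he.symm.trans he'
      simp only [Sym2.eq_iff, Fin.ext_iff, f, Fin.val_castSucc, Fin.val_succ] at this
      omega
    obtain ⟨rfl, htt'⟩ := eq_of_blockStart_add_eq_of_lt_of_lt t.isLt t'.isLt hstart
    exact hne (by rw [Fin.ext htt'])
  · calc _ ≤ #(univ : Finset Bool) := card_le_card_of_injOn (fun p => decide (p.2.val = 0))
          (fun _ _ => mem_coe.2 (mem_univ _)) ?_
      _ = 2 := rfl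
    rintro ⟨j, t⟩ hp ⟨j', t'⟩ hq h0
    simp only [coe_filter, mem_univ, true_and, Set.mem_ofPred_eq, Fin.ext_iff, f] at hp hq
    obtain ⟨rfl, htt'⟩ := eq_of_blockStart_add_eq hl (Nat.le_of_lt_succ t.isLt)
      (Nat.le_of_lt_succ t'.isLt) (hp.trans hq.symm) (by simpa using h0)
    rw [Fin.ext htt']

theorem paths_on_path_embeddable_iff_sum_le_general
    (L : ℕ) (k : ℕ) (l : Fin k → ℕ) (hl : ∀ j, 1 ≤ l j) :
    (∃ f : (j : Fin k) → Fin (l j + 1) → Fin (L + 1),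
      (∀ j, Function.Injective (f j)) ∧
      ∃ Q : (j : Fin k) → (t : Fin (l j)) →
          (SimpleGraph.pathGraph (L + 1)).Walk (f j t.castSucc) (f j t.succ),
        (∀ j t, (Q j t).IsTrail) ∧
        (∀ (j : Fin k) (t : Fin (l j)) (j' : Fin k) (t' : Fin (l j')),
          (⟨j, t⟩ : (j : Fin k) × Fin (l j)) ≠ ⟨j', t'⟩ →
          ∀ e, e ∈ (Q j t).edges → e ∉ (Q j' t').edges) ∧
        (∀ i : Fin (L + 1),
          (Finset.univ.filter
            (fun p : (j : Fin k) × Fin (l j + 1) => f p.1 p.2 = i)).card ≤ 2)) ↔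
    (∑ j, l j) ≤ L :=
  ⟨PathsEmbeddableOnPath.sum_le, pathsEmbeddableOnPath_of_sum_le hl⟩

/-- Uniform-setting path-on-path embedding criterion.  Let `P` be the path graph on the
`L + 1` vertices `{0, …, L}` and let `l j ≥ 1` for `j < k` be the lengths of `k` path
requests.  The requests are simultaneously embeddable — i.e. there are injections
`f j : Fin (l j + 1) → Fin (L + 1)` and trails `Q j t` from `f j t` to `f j (t+1)` whose
edge sets are pairwise disjoint across all `(j, t)`, and every substrate vertex hosts at
most two virtual nodes — if and only if `l 0 + ⋯ + l (k-1) ≤ L`. -/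
theorem paths_on_path_embeddable_iff_sum_le
    (L : ℕ) (hL : 1 ≤ L) (k : ℕ) (l : Fin k → ℕ) (hl : ∀ j, 1 ≤ l j) :
    (∃ f : (j : Fin k) → Fin (l j + 1) → Fin (L + 1),
      (∀ j, Function.Injective (f j)) ∧
      ∃ Q : (j : Fin k) → (t : Fin (l j)) →
          (SimpleGraph.pathGraph (L + 1)).Walk (f j t.castSucc) (f j t.succ),
        (∀ j t, (Q j t).IsTrail) ∧
        (∀ (j : Fin k) (t : Fin (l j)) (j' : Fin k) (t' : Fin (l j')),
          (⟨j, t⟩ : (j : Fin k) × Fin (l j)) ≠ ⟨j', t'⟩ →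
          ∀ e, e ∈ (Q j t).edges → e ∉ (Q j' t').edges) ∧
        (∀ i : Fin (L + 1),
          (Finset.univ.filter
            (fun p : (j : Fin k) × Fin (l j + 1) => f p.1 p.2 = i)).card ≤ 2)) ↔
    (∑ j, l j) ≤ L :=
  paths_on_path_embeddable_iff_sum_le_general L k l hl
end
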